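/- arXiv:math/0511116 — 4 statements merged into one kernel-verified Lean document; each statement's English description precedes it below -/
import Mathlib

section
/- Let $\mu>0$, $\sigma\neq 0$, $\gamma\in[1/2,1)$, $T>0$, and $0<\theta\le T$. Suppose $w:[0,\theta)\to\mathbb{R}$ is measurable with $\int_0^{\theta} e^{-\mu(1-\gamma)s} w_s\,ds = -\frac{1}{\sigma(1-\gamma)}$. Then $\int_0^{\theta} w_s^2\,ds \ge \frac{2\mu}{\sigma^2(1-\gamma)(1-e^{-2\mu(1-\gamma)\theta})} \ge \frac{2\mu}{\sigma^2(1-\gamma)(1-e^{-2\mu(1-\gamma)T})}$. -/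
open Real MeasureTheory

/- The lower bound is the Cauchy–Schwarz inequality for `w` against the weight
`g s = exp (-μ (1-γ) s)`: the constraint fixes `∫ g w`, so `∫ w² ≥ (∫ g w)² / ∫ g²`, and
`∫₀^θ g² = (1 - exp (-2μ(1-γ)θ)) / (2μ(1-γ))` is explicit. The second inequality is the
monotonicity of `θ ↦ 1 - exp (-2μ(1-γ)θ)`. -/

theorem sq_integral_mul_div_le_integral_sq {α : Type*} [MeasurableSpace α] {m : Measure α}
    {f g : α → ℝ} (hf : Integrable (fun x => f x ^ 2) m)
    (hg : Integrable (fun x => g x ^ 2) m) (hfg : Integrable (fun x => f x * g x) m)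
    (hg_pos : 0 < ∫ x, g x ^ 2 ∂m) :
    (∫ x, f x * g x ∂m) ^ 2 / ∫ x, g x ^ 2 ∂m ≤ ∫ x, f x ^ 2 ∂m := by
  set c := (∫ x, f x * g x ∂m) / ∫ x, g x ^ 2 ∂m
  have h_expand : ∫ x, (f x - c * g x) ^ 2 ∂m
      = ∫ x, f x ^ 2 ∂m - 2 * c * ∫ x, f x * g x ∂m + c ^ 2 * ∫ x, g x ^ 2 ∂m := by
    have h_eq : (fun x => (f x - c * g x) ^ 2)
        = fun x => f x ^ 2 - 2 * c * (f x * g x) + c ^ 2 * g x ^ 2 := by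
      funext x; ring
    rw [h_eq, integral_add (by fun_prop) (hg.const_mul _),
      integral_sub hf (hfg.const_mul _), integral_const_mul, integral_const_mul]
  have h_nonneg : 0 ≤ ∫ x, (f x - c * g x) ^ 2 ∂m := integral_nonneg fun x => sq_nonneg _
  have h_min : ∫ x, f x ^ 2 ∂m - 2 * c * ∫ x, f x * g x ∂m + c ^ 2 * ∫ x, g x ^ 2 ∂m
      = ∫ x, f x ^ 2 ∂m - (∫ x, f x * g x ∂m) ^ 2 / ∫ x, g x ^ 2 ∂m := by
    simp only [c]; field_simp; ring
  linarith

theorem intervalIntegral.sq_integral_mul_div_le_integral_sq {a b : ℝ} {f g : ℝ → ℝ}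
    (hab : a ≤ b) (hf : IntervalIntegrable (fun x => f x ^ 2) volume a b)
    (hg : IntervalIntegrable (fun x => g x ^ 2) volume a b)
    (hfg : IntervalIntegrable (fun x => f x * g x) volume a b)
    (hg_pos : 0 < ∫ x in a..b, g x ^ 2) :
    (∫ x in a..b, f x * g x) ^ 2 / ∫ x in a..b, g x ^ 2 ≤ ∫ x in a..b, f x ^ 2 := by
  simp only [intervalIntegral.integral_of_le hab] at hg_pos ⊢
  exact _root_.sq_integral_mul_div_le_integral_sq hf.1 hg.1 hfg.1 hg_pos

theorem integral_exp_mul {c : ℝ} (hc : c ≠ 0) (a b : ℝ) :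
    ∫ x in a..b, exp (c * x) = (exp (c * b) - exp (c * a)) / c := by
  rw [intervalIntegral.integral_comp_mul_left (fun x => exp x) hc, integral_exp, smul_eq_mul,
    inv_mul_eq_div]

theorem integral_exp_mul_sq {c : ℝ} (hc : c ≠ 0) (a b : ℝ) :
    ∫ x in a..b, exp (c * x) ^ 2 = (exp (2 * c * b) - exp (2 * c * a)) / (2 * c) := by
  simp only [← exp_nat_mul, Nat.cast_ofNat, ← mul_assoc]
  exact integral_exp_mul (mul_ne_zero two_ne_zero hc) a b

theorem cauchy_schwarz_control_lower_bound_general (μ σ γ T θ : ℝ) (hμ : 0 < μ) (hσ : σ ≠ 0)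
    (hγ : γ ∈ Set.Ico (1/2 : ℝ) 1) (hθ0 : 0 < θ) (hθT : θ ≤ T)
    (w : ℝ → ℝ)
    (hw2 : IntervalIntegrable (fun s => (w s)^2) volume 0 θ)
    (hconstraint : ∫ s in (0:ℝ)..θ, Real.exp (-μ*(1-γ)*s) * w s = -1/(σ*(1-γ))) :
    (2*μ) / (σ^2*(1-γ)*(1 - Real.exp (-2*μ*(1-γ)*θ))) ≤ ∫ s in (0:ℝ)..θ, (w s)^2
    ∧ (2*μ) / (σ^2*(1-γ)*(1 - Real.exp (-2*μ*(1-γ)*T)))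
        ≤ (2*μ) / (σ^2*(1-γ)*(1 - Real.exp (-2*μ*(1-γ)*θ))) := by
  have h1γ : 0 < 1 - γ := sub_pos.mpr hγ.2
  have hk : 0 < μ * (1 - γ) := mul_pos hμ h1γ
  have hK : -1 / (σ * (1 - γ)) ≠ 0 := div_ne_zero (by norm_num) (mul_ne_zero hσ h1γ.ne')
  -- A non-integrable product would have integral `0`, contradicting the constraint.
  have hint : IntervalIntegrable (fun s => w s * exp (-μ * (1 - γ) * s)) volume 0 θ := by
    by_contra h
    rw [intervalIntegral.integral_undef (by simpa only [mul_comm] using h)] at hconstraint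
    exact hK hconstraint.symm
  have hexp_lt : exp (-2 * μ * (1 - γ) * θ) < 1 := exp_lt_one_iff.mpr (by nlinarith)
  have hg2 : ∫ s in (0:ℝ)..θ, exp (-μ * (1 - γ) * s) ^ 2
      = (1 - exp (-2 * μ * (1 - γ) * θ)) / (2 * μ * (1 - γ)) := by
    rw [integral_exp_mul_sq (by nlinarith), mul_zero, exp_zero]
    field_simp
    ring_nf
  have hcs := intervalIntegral.sq_integral_mul_div_le_integral_sq hθ0.le hw2
    ((by fun_prop : Continuous fun s => exp (-μ * (1 - γ) * s) ^ 2).intervalIntegrable _ _) hint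
    (by rw [hg2]; exact div_pos (sub_pos.mpr hexp_lt) (by linarith))
  simp only [mul_comm (w _)] at hcs
  rw [hconstraint, hg2] at hcs
  refine ⟨le_of_eq_of_le ?_ hcs, ?_⟩
  · field_simp
  · have hexp_le : exp (-2 * μ * (1 - γ) * T) ≤ exp (-2 * μ * (1 - γ) * θ) :=
      exp_le_exp.mpr (by nlinarith)
    gcongr

theorem cauchy_schwarz_control_lower_bound (μ σ γ T θ : ℝ) (hμ : 0 < μ) (hσ : σ ≠ 0)
    (hγ : γ ∈ Set.Ico (1/2 : ℝ) 1) (hT : 0 < T) (hθ0 : 0 < θ) (hθT : θ ≤ T)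
    (w : ℝ → ℝ) (hmeas : Measurable w)
    (hw2 : IntervalIntegrable (fun s => (w s)^2) volume 0 θ)
    (hconstraint : ∫ s in (0:ℝ)..θ, Real.exp (-μ*(1-γ)*s) * w s = -1/(σ*(1-γ))) :
    (2*μ) / (σ^2*(1-γ)*(1 - Real.exp (-2*μ*(1-γ)*θ))) ≤ ∫ s in (0:ℝ)..θ, (w s)^2
    ∧ (2*μ) / (σ^2*(1-γ)*(1 - Real.exp (-2*μ*(1-γ)*T)))
        ≤ (2*μ) / (σ^2*(1-γ)*(1 - Real.exp (-2*μ*(1-γ)*θ))) :=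
  cauchy_schwarz_control_lower_bound_general μ σ γ T θ hμ hσ hγ hθ0 hθT w hw2 hconstraint
end

section
/- Let $\mu>0$, $\sigma\neq 0$, $\gamma\in[1/2,1)$, $T>0$. The infimum, over all $\theta\in(0,T]$ and measurable $w:[0,\theta)\to\mathbb{R}$ with $\int_0^{\theta} e^{-\mu(1-\gamma)s}w_s\,ds = -\frac{1}{\sigma(1-\gamma)}$, of $\frac{1}{2}\int_0^{\theta}w_s^2\,ds$ equals $\frac{\mu}{\sigma^2(1-\gamma)(1-e^{-2\mu(1-\gamma)T})}$, and this equals $\frac{1}{2\langle M\rangle_T}$ where $\langle M\rangle_T = \int_0^T\sigma^2(1-\gamma)^2 e^{-2(1-\gamma)\mu s}\,ds$. -/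
/-!
By Cauchy–Schwarz, every admissible control `w` on `[0, θ]` satisfies
`c² ≤ (∫₀^θ f²) (∫₀^θ w²)`, and `∫₀^θ f²` increases with `θ`, so `½ ∫ w² ≥ c² / (2 ∫₀^T f²)`;
equality holds for `θ = T` and `w` proportional to `f`. For `f s = exp (-μ (1 - γ) s)` and
`c = -1 / (σ (1 - γ))` this is the closed form, and `σ² (1 - γ)² ∫₀^T f² = ⟨M⟩_T`.
-/

open Real MeasureTheory

lemma integral_exp_mul_of_ne_zero {b : ℝ} (hb : b ≠ 0) (t : ℝ) :
    ∫ s in (0:ℝ)..t, exp (b * s) = (exp (b * t) - 1) / b := by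
  rw [intervalIntegral.integral_comp_mul_left (fun x => exp x) hb]
  simp [div_eq_inv_mul]

lemma intervalIntegrable_mul_of_sq {f g : ℝ → ℝ} {a b : ℝ}
    (hf : AEStronglyMeasurable f) (hg : AEStronglyMeasurable g)
    (hf2 : IntervalIntegrable (fun s => f s ^ 2) volume a b)
    (hg2 : IntervalIntegrable (fun s => g s ^ 2) volume a b) :
    IntervalIntegrable (fun s => f s * g s) volume a b := by
  refine ((hf2.add hg2).const_mul (1 / 2)).mono_fun' (hf.mul hg).restrict
    (Filter.Eventually.of_forall fun s => ?_)
  simp only [Real.norm_eq_abs, abs_mul]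
  nlinarith [sq_nonneg (|f s| - |g s|), sq_abs (f s), sq_abs (g s)]

theorem sq_intervalIntegral_mul_le {f g : ℝ → ℝ} {a b : ℝ} (hab : a ≤ b)
    (hfg : IntervalIntegrable (fun s => f s * g s) volume a b)
    (hf2 : IntervalIntegrable (fun s => f s ^ 2) volume a b)
    (hg2 : IntervalIntegrable (fun s => g s ^ 2) volume a b) :
    (∫ s in a..b, f s * g s) ^ 2 ≤ (∫ s in a..b, f s ^ 2) * ∫ s in a..b, g s ^ 2 := by
  have hquad : ∀ x : ℝ, 0 ≤ (∫ s in a..b, f s ^ 2) * (x * x)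
      + 2 * (∫ s in a..b, f s * g s) * x + ∫ s in a..b, g s ^ 2 := by
    intro x
    have hnonneg : 0 ≤ ∫ s in a..b, (x * x * f s ^ 2 + 2 * x * (f s * g s)) + g s ^ 2 :=
      intervalIntegral.integral_nonneg hab fun s _ => by nlinarith [sq_nonneg (x * f s + g s)]
    rw [intervalIntegral.integral_add ((hf2.const_mul _).add (hfg.const_mul _)) hg2,
      intervalIntegral.integral_add (hf2.const_mul _) (hfg.const_mul _),
      intervalIntegral.integral_const_mul, intervalIntegral.integral_const_mul] at hnonneg
    linarith
  have hdiscrim := discrim_le_zero hquad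
  rw [discrim] at hdiscrim
  linarith

def controlCosts (f : ℝ → ℝ) (c T : ℝ) : Set ℝ :=
  {x : ℝ | ∃ θ : ℝ, 0 < θ ∧ θ ≤ T ∧ ∃ w : ℝ → ℝ, Measurable w ∧
    IntervalIntegrable (fun s => (w s) ^ 2) volume 0 θ ∧
    (∫ s in (0:ℝ)..θ, f s * w s) = c ∧ x = (1 / 2) * ∫ s in (0:ℝ)..θ, (w s) ^ 2}

theorem isLeast_controlCosts {f : ℝ → ℝ} (hf : Continuous f) (c : ℝ) {T : ℝ} (hT : 0 < T)
    (hI : 0 < ∫ s in (0:ℝ)..T, f s ^ 2) :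
    IsLeast (controlCosts f c T) (c ^ 2 / (2 * ∫ s in (0:ℝ)..T, f s ^ 2)) := by
  have hf2 : ∀ θ, IntervalIntegrable (fun s => f s ^ 2) volume 0 θ := fun θ =>
    (hf.pow 2).intervalIntegrable 0 θ
  constructor
  · refine ⟨T, hT, le_rfl, fun s => c / (∫ t in (0:ℝ)..T, f t ^ 2) * f s,
      (hf.const_mul _).measurable, ((hf.const_mul _).pow 2).intervalIntegrable 0 T, ?_, ?_⟩
    · simp only [mul_left_comm (f _), ← sq, intervalIntegral.integral_const_mul]
      field_simp
    · simp only [mul_pow, intervalIntegral.integral_const_mul]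
      field_simp
  · rintro x ⟨θ, hθ, hθT, w, hw, hw2, hc, rfl⟩
    have hfw := intervalIntegrable_mul_of_sq hf.aestronglyMeasurable hw.aestronglyMeasurable
      (hf2 θ) hw2
    have hCS := sq_intervalIntegral_mul_le hθ.le hfw (hf2 θ) hw2
    have hmono : ∫ s in (0:ℝ)..θ, f s ^ 2 ≤ ∫ s in (0:ℝ)..T, f s ^ 2 :=
      intervalIntegral.integral_mono_interval le_rfl hθ.le hθT
        (Filter.Eventually.of_forall fun s => sq_nonneg (f s)) (hf2 T)
    have hw2_nonneg : 0 ≤ ∫ s in (0:ℝ)..θ, w s ^ 2 :=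
      intervalIntegral.integral_nonneg hθ.le fun s _ => sq_nonneg (w s)
    rw [hc] at hCS
    rw [div_le_iff₀ (by positivity)]
    nlinarith

theorem optimal_control_infimum_general (μ σ γ T : ℝ) (hμ : 0 < μ)
    (hγ : γ ∈ Set.Ico (1/2 : ℝ) 1) (hT : 0 < T) :
    sInf {x : ℝ | ∃ θ : ℝ, 0 < θ ∧ θ ≤ T ∧ ∃ w : ℝ → ℝ, Measurable w ∧
        IntervalIntegrable (fun s => (w s)^2) volume 0 θ ∧
        (∫ s in (0:ℝ)..θ, Real.exp (-μ*(1-γ)*s) * w s) = -1/(σ*(1-γ)) ∧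
        x = (1/2) * ∫ s in (0:ℝ)..θ, (w s)^2}
      = μ / (σ^2*(1-γ)*(1 - Real.exp (-2*μ*(1-γ)*T)))
    ∧ μ / (σ^2*(1-γ)*(1 - Real.exp (-2*μ*(1-γ)*T)))
      = 1 / (2 * ∫ s in (0:ℝ)..T, σ^2*(1-γ)^2 * Real.exp (-2*(1-γ)*μ*s)) := by
  have hk : 0 < μ * (1 - γ) := mul_pos hμ (sub_pos.2 hγ.2)
  have hE : exp (-2 * μ * (1 - γ) * T) < 1 := exp_lt_one_iff.2 (by nlinarith)
  have hexp : ∫ s in (0:ℝ)..T, exp (-2 * μ * (1 - γ) * s)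
      = (1 - exp (-2 * μ * (1 - γ) * T)) / (2 * μ * (1 - γ)) := by
    rw [integral_exp_mul_of_ne_zero (by linarith), div_eq_div_iff (by linarith) (by linarith)]
    ring
  have hweight : ∫ s in (0:ℝ)..T, exp (-μ * (1 - γ) * s) ^ 2
      = (1 - exp (-2 * μ * (1 - γ) * T)) / (2 * μ * (1 - γ)) := by
    simp_rw [← exp_nat_mul, ← mul_assoc, Nat.cast_ofNat, mul_neg, ← neg_mul, hexp]
  have hI : 0 < ∫ s in (0:ℝ)..T, exp (-μ * (1 - γ) * s) ^ 2 :=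
    intervalIntegral.intervalIntegral_pos_of_pos
      ((by fun_prop : Continuous _).intervalIntegrable 0 T) (fun s => by positivity) hT
  have hE1 : 1 - exp (-2 * μ * (1 - γ) * T) ≠ 0 := (sub_pos.2 hE).ne'
  refine ⟨(isLeast_controlCosts (by fun_prop) _ hT hI).csInf_eq.trans ?_, ?_⟩
  · rw [hweight]
    rcases eq_or_ne σ 0 with rfl | hσ
    · simp -- `x / 0 = 0` makes both sides vanish
    · field_simp
  · simp_rw [intervalIntegral.integral_const_mul, mul_right_comm _ (1 - γ) μ, hexp]
    rcases eq_or_ne σ 0 with rfl | hσ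
    · simp
    · field_simp

theorem optimal_control_infimum (μ σ γ T : ℝ) (hμ : 0 < μ) (hσ : σ ≠ 0)
    (hγ : γ ∈ Set.Ico (1/2 : ℝ) 1) (hT : 0 < T) :
    sInf {x : ℝ | ∃ θ : ℝ, 0 < θ ∧ θ ≤ T ∧ ∃ w : ℝ → ℝ, Measurable w ∧
        IntervalIntegrable (fun s => (w s)^2) volume 0 θ ∧
        (∫ s in (0:ℝ)..θ, Real.exp (-μ*(1-γ)*s) * w s) = -1/(σ*(1-γ)) ∧
        x = (1/2) * ∫ s in (0:ℝ)..θ, (w s)^2}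
      = μ / (σ^2*(1-γ)*(1 - Real.exp (-2*μ*(1-γ)*T)))
    ∧ μ / (σ^2*(1-γ)*(1 - Real.exp (-2*μ*(1-γ)*T)))
      = 1 / (2 * ∫ s in (0:ℝ)..T, σ^2*(1-γ)^2 * Real.exp (-2*(1-γ)*μ*s)) :=
  optimal_control_infimum_general μ σ γ T hμ hγ hT
end

section
/- Let $(X_t)$ solve $dX_t=\mu X_t dt + \sigma X_t^{\gamma} dB_t$, $X_0=K>0$, $\gamma\in[1/2,1)$, with absorption at $0$, and let $\tau_0$ be the absorption time, $M_t = \int_0^t\sigma(1-\gamma)e^{-(1-\gamma)\mu s}dB_s$, and $\langle M\rangle_T = \int_0^T\sigma^2(1-\gamma)^2 e^{-2(1-\gamma)\mu s}ds$. Then for every $K>0$ and $T>0$, $\mathsf{P}(\tau_0\le T) \ge \Phi\big(-K^{1-\gamma}/\sqrt{\langle M\rangle_T}\big)$, where $\Phi$ is the standard normal CDF. -/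
open Real MeasureTheory ProbabilityTheory Set
open scoped NNReal

/-!
Before absorption, Itô's formula for `Y = X^{1-γ}` gives
`dY = ((1-γ)μ Y - c) dt + (1-γ)σ dB` with `c = γ(1-γ)σ² X^{γ-1}/2 ≥ 0`. Variation of constants
turns this into `e^{-(1-γ)μT} Y_T = K^{1-γ} + M_T - ∫₀ᵀ e^{-(1-γ)μs} c_s ds`, so on a path that
survives past `T` we get `M_T > -K^{1-γ}`. Hence `{M_T ≤ -K^{1-γ}} ⊆ {τ₀ ≤ T}`, and the former
event has probability `Φ(-K^{1-γ}/√⟨M⟩_T)` because `M_T ~ N(0, ⟨M⟩_T)`.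
-/

lemma pos_of_lt_sInf_zeros {x : ℝ → ℝ} (hx : ∀ t, 0 ≤ t → 0 ≤ x t) {s : ℝ} (hs : 0 ≤ s)
    (hlt : s < sInf {t | 0 ≤ t ∧ x t = 0}) : 0 < x s :=
  (hx s hs).lt_of_ne fun h => hlt.not_ge (csInf_le ⟨0, fun _ ht => ht.1⟩ ⟨hs, h.symm⟩)

lemma ContinuousOn.hasDerivAt_integral_of_mem_Ioo {f : ℝ → ℝ} {a b t : ℝ}
    (hf : ContinuousOn f (Icc a b)) (ht : t ∈ Ioo a b) :
    HasDerivAt (fun u => ∫ s in a..u, f s) (f t) t :=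
  intervalIntegral.integral_hasDerivAt_right
    ((hf.mono (Icc_subset_Icc_right ht.2.le)).intervalIntegrable_of_Icc ht.1.le)
    ((hf.mono Ioo_subset_Icc_self).stronglyMeasurableAtFilter isOpen_Ioo t ht)
    (hf.continuousAt (Icc_mem_nhds ht.1 ht.2))

theorem exp_mul_eq_of_eq_add_integral {Y b c : ℝ → ℝ} {a β y₀ T : ℝ} (hT : 0 ≤ T)
    (hY : ContinuousOn Y (Icc 0 T)) (hb : ContinuousOn b (Icc 0 T))
    (hc : ContinuousOn c (Icc 0 T))
    (h : ∀ t ∈ Icc 0 T, Y t = y₀ + (∫ s in (0:ℝ)..t, (a * Y s - c s)) + β * b t) :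
    exp (-a * T) * Y T
      = y₀ + β * (exp (-a * T) * b T + a * ∫ s in (0:ℝ)..T, exp (-a * s) * b s)
        - ∫ s in (0:ℝ)..T, exp (-a * s) * c s := by
  -- `Y` need not be differentiable (`b` is only continuous), but `A = Y - β b` is.
  set A : ℝ → ℝ := fun u => y₀ + ∫ s in (0:ℝ)..u, (a * Y s - c s)
  have hA : ∀ t ∈ Icc 0 T, A t = Y t - β * b t := fun t ht => by
    simp only [A]; linarith [h t ht]
  have hA_cont : ContinuousOn A (Icc 0 T) :=
    (hY.sub (continuousOn_const.mul hb)).congr hA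
  have hA' : ∀ t ∈ Ioo 0 T, HasDerivAt A (a * Y t - c t) t := fun t ht =>
    ((hY.const_smul a).sub hc |>.hasDerivAt_integral_of_mem_Ioo ht).const_add y₀
  have hF' : ∀ t ∈ Ioo 0 T, HasDerivAt (fun u => exp (-a * u) * A u)
      (exp (-a * t) * (a * β * b t - c t)) t := fun t ht => by
    refine (((hasDerivAt_id t).const_mul (-a)).exp.mul (hA' t ht)).congr_deriv ?_
    rw [hA t (Ioo_subset_Icc_self ht)]
    simp only [id]; ring
  have hFTC := intervalIntegral.integral_eq_sub_of_hasDerivAt_of_le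
    (f := fun u => exp (-a * u) * A u) hT
    ((continuous_exp.comp_continuousOn (by fun_prop)).mul hA_cont) hF'
    (ContinuousOn.intervalIntegrable_of_Icc (u := fun s => exp (-a * s) * (a * β * b s - c s))
      hT (by fun_prop))
  have hsplit : ∫ s in (0:ℝ)..T, exp (-a * s) * (a * β * b s - c s)
      = a * β * (∫ s in (0:ℝ)..T, exp (-a * s) * b s) - ∫ s in (0:ℝ)..T, exp (-a * s) * c s := by
    simp only [mul_sub, mul_left_comm _ (a * β)]
    rw [intervalIntegral.integral_sub, intervalIntegral.integral_const_mul]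
    · exact ContinuousOn.intervalIntegrable_of_Icc hT (by fun_prop)
    · exact ContinuousOn.intervalIntegrable_of_Icc hT (by fun_prop)
  rw [hsplit, hA T (right_mem_Icc.2 hT)] at hFTC
  simp only [A, mul_zero, exp_zero, intervalIntegral.integral_same, add_zero, one_mul] at hFTC
  linear_combination -hFTC

lemma gaussianReal_zero_Iic_eq_standard {v : ℝ≥0} (hv : v ≠ 0) (x : ℝ) :
    gaussianReal 0 v (Iic x) = gaussianReal 0 1 (Iic (x / √v)) := by
  have hsqrt : 0 < √(v : ℝ) := Real.sqrt_pos.2 (by positivity)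
  have hscale : (gaussianReal 0 1).map (√v * ·) = gaussianReal 0 v := by
    rw [gaussianReal_map_const_mul, mul_zero, mul_one]
    congr
    simp
  rw [← hscale, Measure.map_apply (measurable_const_mul _) measurableSet_Iic]
  congr
  ext y
  simp [le_div_iff₀ hsqrt, mul_comm]

theorem neg_rpow_lt_cev_martingale_of_pos {x b : ℝ → ℝ} {μ σ γ K T : ℝ} (hγ : γ ∈ Icc 0 1)
    (hT : 0 ≤ T) (hx : Continuous x) (hb : Continuous b) (hpos : ∀ s ∈ Icc 0 T, 0 < x s)
    (hSDE : ∀ t ∈ Icc 0 T, x t ^ (1-γ) = K ^ (1-γ)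
        + (∫ s in (0:ℝ)..t, ((1-γ)*μ*(x s) ^ (1-γ) - γ*(1-γ)*σ^2/2 * (x s) ^ (γ-1)))
        + (1-γ)*σ*b t) :
    -(K ^ (1-γ)) < σ*(1-γ) * (exp (-(1-γ)*μ*T) * b T
      + (1-γ)*μ * ∫ s in (0:ℝ)..T, exp (-(1-γ)*μ*s) * b s) := by
  have hx_rpow : ∀ p : ℝ, ContinuousOn (fun s => x s ^ p) (Icc 0 T) := fun p =>
    hx.continuousOn.rpow_const fun s hs => Or.inl (hpos s hs).ne'
  have hcoef : 0 ≤ γ*(1-γ)*σ^2/2 := by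
    have := mul_nonneg hγ.1 (sub_nonneg.2 hγ.2)
    positivity
  have hvoc := exp_mul_eq_of_eq_add_integral (c := fun s => γ*(1-γ)*σ^2/2 * x s ^ (γ-1)) hT
    (hx_rpow _) hb.continuousOn (continuousOn_const.mul (hx_rpow _)) hSDE
  have hdrift : 0 ≤ ∫ s in (0:ℝ)..T, exp (-((1-γ)*μ) * s) * (γ*(1-γ)*σ^2/2 * x s ^ (γ-1)) :=
    intervalIntegral.integral_nonneg hT fun s hs =>
      mul_nonneg (exp_nonneg _) (mul_nonneg hcoef (rpow_nonneg (hpos s hs).le _))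
  have hXT : 0 < exp (-((1-γ)*μ) * T) * x T ^ (1-γ) :=
    mul_pos (exp_pos _) (rpow_pos_of_pos (hpos T (right_mem_Icc.2 hT)) _)
  simp only [neg_mul] at hvoc hdrift hXT ⊢
  linarith

theorem ruin_probability_gaussian_lower_bound_general {Ω : Type*} [MeasurableSpace Ω]
    (P : Measure Ω) [IsProbabilityMeasure P]
    (μ σ γ K T : ℝ) (hσ : σ ≠ 0) (hγ : γ ∈ Set.Ico (1/2 : ℝ) 1)
    (hT : 0 < T)
    (B X : ℝ → Ω → ℝ) (M : ℝ → Ω → ℝ) (τ₀ : Ω → ℝ)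
    (hBcont : ∀ ω, Continuous (fun t => B t ω))
    (hXcont : ∀ ω, Continuous (fun t => X t ω))
    (hXnonneg : ∀ t ω, 0 ≤ t → 0 ≤ X t ω)
    (hτ : ∀ ω, τ₀ ω = sInf {t : ℝ | 0 ≤ t ∧ X t ω = 0})
    (hSDE : ∀ ω, ∀ t, 0 ≤ t → t < τ₀ ω →
      (X t ω) ^ (1-γ) = K ^ (1-γ)
        + (∫ s in (0:ℝ)..t,
            ((1-γ)*μ*(X s ω) ^ (1-γ) - γ*(1-γ)*σ^2/2 * (X s ω) ^ (γ-1)))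
        + (1-γ)*σ*B t ω)
    (hM : ∀ ω, ∀ t,
      M t ω = σ*(1-γ) * (Real.exp (-(1-γ)*μ*t) * B t ω
        + (1-γ)*μ * ∫ s in (0:ℝ)..t, Real.exp (-(1-γ)*μ*s) * B s ω))
    (qv : ℝ) (hqv : qv = ∫ s in (0:ℝ)..T, σ^2*(1-γ)^2 * Real.exp (-2*(1-γ)*μ*s))
    (hlaw : Measure.map (fun ω => M T ω) P = gaussianReal 0 (Real.toNNReal qv)) :
    ENNReal.ofReal
        ((gaussianReal 0 1 (Set.Iic (-(K ^ (1-γ)) / Real.sqrt qv))).toReal)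
      ≤ P {ω | τ₀ ω ≤ T} := by
  have hqv_pos : 0 < qv := by
    have : 0 < 1 - γ := sub_pos.2 hγ.2
    rw [hqv]
    exact intervalIntegral.intervalIntegral_pos_of_pos
      (Continuous.intervalIntegrable (by fun_prop) _ _) (fun s => by positivity) hT
  have hruin : {ω | M T ω ≤ -(K ^ (1-γ))} ⊆ {ω | τ₀ ω ≤ T} := by
    intro ω (hMω : M T ω ≤ -(K ^ (1-γ)))
    show τ₀ ω ≤ T
    by_contra! hTτ
    have hpos : ∀ s ∈ Icc 0 T, 0 < X s ω := fun s hs =>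
      pos_of_lt_sInf_zeros (hXnonneg · ω) hs.1 (hτ ω ▸ hs.2.trans_lt hTτ)
    have hM_gt := neg_rpow_lt_cev_martingale_of_pos ⟨by linarith [hγ.1], hγ.2.le⟩ hT.le
      (hXcont ω) (hBcont ω) hpos fun t ht => hSDE ω t ht.1 (ht.2.trans_lt hTτ)
    rw [hM] at hMω
    exact hM_gt.not_ge hMω
  have hM_meas : AEMeasurable (M T) P := aemeasurable_of_map_neZero (by rw [hlaw]; infer_instance)
  calc ENNReal.ofReal (gaussianReal 0 1 (Iic (-(K ^ (1-γ)) / √qv))).toReal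
      = gaussianReal 0 qv.toNNReal (Iic (-(K ^ (1-γ)))) := by
        rw [ENNReal.ofReal_toReal (measure_ne_top _ _),
          gaussianReal_zero_Iic_eq_standard (v := qv.toNNReal) (by simp [hqv_pos]),
          Real.coe_toNNReal _ hqv_pos.le]
    _ = P {ω | M T ω ≤ -(K ^ (1-γ))} := by
        rw [← hlaw, Measure.map_apply_of_aemeasurable hM_meas measurableSet_Iic]
        rfl
    _ ≤ P {ω | τ₀ ω ≤ T} := measure_mono hruin

/-- Non-asymptotic lower bound for the ruin probability of the CEV process.
The SDE `dX = μ X dt + σ X^γ dB` is encoded pathwise through the identity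
obtained by Itô's formula for `X^{1-γ}` before absorption (the stochastic
integral there has a constant integrand, hence equals `σ(1-γ)B_t`), and the
Gaussian martingale `M_t = ∫_0^t σ(1-γ) e^{-(1-γ)μ s} dB_s` is written pathwise
via integration by parts; its law at time `T` is centered Gaussian with variance
`⟨M⟩_T = ∫_0^T σ²(1-γ)² e^{-2(1-γ)μ s} ds`. -/
theorem ruin_probability_gaussian_lower_bound {Ω : Type*} [MeasurableSpace Ω]
    (P : Measure Ω) [IsProbabilityMeasure P]
    (μ σ γ K T : ℝ) (hσ : σ ≠ 0) (hγ : γ ∈ Set.Ico (1/2 : ℝ) 1)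
    (hK : 0 < K) (hT : 0 < T)
    (B X : ℝ → Ω → ℝ) (M : ℝ → Ω → ℝ) (τ₀ : Ω → ℝ)
    (hBcont : ∀ ω, Continuous (fun t => B t ω)) (hB0 : ∀ ω, B 0 ω = 0)
    (hXcont : ∀ ω, Continuous (fun t => X t ω))
    (hXnonneg : ∀ t ω, 0 ≤ t → 0 ≤ X t ω)
    (hX0 : ∀ ω, X 0 ω = K)
    (hτ : ∀ ω, τ₀ ω = sInf {t : ℝ | 0 ≤ t ∧ X t ω = 0})
    (habs : ∀ ω, ∀ t, τ₀ ω ≤ t → X t ω = 0)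
    (hSDE : ∀ ω, ∀ t, 0 ≤ t → t < τ₀ ω →
      (X t ω) ^ (1-γ) = K ^ (1-γ)
        + (∫ s in (0:ℝ)..t,
            ((1-γ)*μ*(X s ω) ^ (1-γ) - γ*(1-γ)*σ^2/2 * (X s ω) ^ (γ-1)))
        + (1-γ)*σ*B t ω)
    (hM : ∀ ω, ∀ t,
      M t ω = σ*(1-γ) * (Real.exp (-(1-γ)*μ*t) * B t ω
        + (1-γ)*μ * ∫ s in (0:ℝ)..t, Real.exp (-(1-γ)*μ*s) * B s ω))
    (qv : ℝ) (hqv : qv = ∫ s in (0:ℝ)..T, σ^2*(1-γ)^2 * Real.exp (-2*(1-γ)*μ*s))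
    (hlaw : Measure.map (fun ω => M T ω) P = gaussianReal 0 (Real.toNNReal qv)) :
    ENNReal.ofReal
        ((gaussianReal 0 1 (Set.Iic (-(K ^ (1-γ)) / Real.sqrt qv))).toReal)
      ≤ P {ω | τ₀ ω ≤ T} :=
  ruin_probability_gaussian_lower_bound_general P μ σ γ K T hσ hγ hT B X M τ₀ hBcont hXcont hXnonneg
    hτ hSDE hM qv hqv hlaw
end

section
/- Let $\mu>0$, $\gamma\in[1/2,1)$, $T>0$, and define $u^*_t = e^{\mu t}\left[\frac{e^{-2(1-\gamma)\mu t} - e^{-2(1-\gamma)\mu T}}{1 - e^{-2(1-\gamma)\mu T}}\right]^{1/(1-\gamma)}$ for $t\in[0,T]$. Then $u^*$ is differentiable on $[0,T)$ and satisfies, for all $t\in[0,T)$, $\dot u^*_t = \mu u^*_t - \frac{2\mu}{1-e^{-2\mu(1-\gamma)T}} e^{-\mu(1-\gamma)t}\,(u^*_t)^{\gamma}$. -/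
open Real

/-!
Write `u* = e^{μt} φ^p` with `φ` the bracket and `p = 1/(1-γ)`. Since `pγ = p - 1`, we have
`(u*)^γ = e^{μγt} φ^{p-1}`, so the chain rule gives the Bernoulli-type equation
`u̇ = μu + p φ̇ e^{μ(1-γ)t} u^γ` wherever `φ > 0`, which holds on `[0, T)`. With `c = 2(1-γ)μ`,
`φ̇ = -c e^{-ct}/(1 - e^{-cT})` and `pc = 2μ`, so the coefficient of `u^γ` is the claimed one.
-/

theorem rpow_exp_mul_rpow {μ γ p x y : ℝ} (hy : 0 < y) (hp : p * (1 - γ) = 1) :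
    (exp (μ * x) * y ^ p) ^ γ = exp (μ * γ * x) * y ^ (p - 1) := by
  rw [mul_rpow (exp_pos _).le (rpow_nonneg hy.le p), ← exp_mul, ← rpow_mul hy.le,
    show p * γ = p - 1 by linear_combination -hp, mul_right_comm]

theorem hasDerivAt_exp_mul_rpow {μ γ p t φ' : ℝ} {φ : ℝ → ℝ} (hp : p * (1 - γ) = 1)
    (hφ : HasDerivAt φ φ' t) (hpos : 0 < φ t) :
    HasDerivAt (fun s => exp (μ * s) * φ s ^ p)
      (μ * (exp (μ * t) * φ t ^ p)
        + p * φ' * exp (μ * (1 - γ) * t) * (exp (μ * t) * φ t ^ p) ^ γ) t := by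
  refine (((hasDerivAt_id t).const_mul μ).exp.mul
    (hφ.rpow_const (p := p) (Or.inl hpos.ne'))).congr_deriv ?_
  have hexp : exp (μ * (1 - γ) * t) * exp (μ * γ * t) = exp (μ * t) := by
    rw [← exp_add]; ring_nf
  rw [rpow_exp_mul_rpow hpos hp]
  simp only [id, mul_one]
  linear_combination -(p * φ' * φ t ^ (p - 1)) * hexp

theorem exp_neg_mul_sub_div_pos {c t T : ℝ} (hc : 0 < c) (ht : t ∈ Set.Ico 0 T) :
    0 < (exp (-c * t) - exp (-c * T)) / (1 - exp (-c * T)) := by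
  obtain ⟨ht0, htT⟩ := ht
  have hlt : exp (-c * T) < exp (-c * t) := exp_lt_exp.2 (by nlinarith)
  have hle : exp (-c * t) ≤ 1 := exp_le_one_iff.2 (by nlinarith)
  exact div_pos (by linarith) (by linarith)

theorem hasDerivAt_exp_neg_mul_sub_div (c T t : ℝ) :
    HasDerivAt (fun s => (exp (-c * s) - exp (-c * T)) / (1 - exp (-c * T)))
      (-c * exp (-c * t) / (1 - exp (-c * T))) t :=
  ((((hasDerivAt_id t).const_mul (-c)).exp.sub_const (exp (-c * T))).div_const
    (1 - exp (-c * T))).congr_deriv (by simp only [id, mul_one]; ring)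

theorem most_likely_path_ode_general (μ γ T : ℝ) (hμ : 0 < μ)
    (hγ : γ ∈ Set.Ico (1/2 : ℝ) 1)
    (ustar : ℝ → ℝ)
    (hu : ∀ t, ustar t = Real.exp (μ*t) *
      ((Real.exp (-2*(1-γ)*μ*t) - Real.exp (-2*(1-γ)*μ*T)) /
        (1 - Real.exp (-2*(1-γ)*μ*T))) ^ (1/(1-γ))) :
    ∀ t ∈ Set.Ico (0:ℝ) T,
      HasDerivAt ustar
        (μ * ustar t
          - (2*μ / (1 - Real.exp (-2*μ*(1-γ)*T))) * Real.exp (-μ*(1-γ)*t)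
            * (ustar t) ^ γ) t := by
  intro t ht
  have hγ1 : 0 < 1 - γ := sub_pos.2 hγ.2
  set c := 2 * (1 - γ) * μ with hc
  have hp : 1 / (1 - γ) * (1 - γ) = 1 := one_div_mul_cancel hγ1.ne'
  have hu' : ustar = fun s => exp (μ * s) *
      ((exp (-c * s) - exp (-c * T)) / (1 - exp (-c * T))) ^ (1 / (1 - γ)) := by
    funext s; simp only [hu, hc, neg_mul]
  have h := hasDerivAt_exp_mul_rpow (μ := μ) hp (hasDerivAt_exp_neg_mul_sub_div c T t)
    (exp_neg_mul_sub_div_pos (by positivity) ht)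
  rw [hu']
  refine h.congr_deriv ?_
  have hD : exp (-2 * μ * (1 - γ) * T) = exp (-c * T) := by rw [hc]; ring_nf
  have hcoef : 1 / (1 - γ) * (-c * exp (-c * t) / (1 - exp (-c * T))) * exp (μ * (1 - γ) * t)
      = -(2 * μ / (1 - exp (-c * T))) * exp (-μ * (1 - γ) * t) := by
    have hexp : exp (-c * t) * exp (μ * (1 - γ) * t) = exp (-μ * (1 - γ) * t) := by
      rw [← exp_add, hc]; ring_nf
    rw [← hexp, hc]
    field_simp
  rw [hcoef, hD]
  ring

theorem most_likely_path_ode (μ γ T : ℝ) (hμ : 0 < μ)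
    (hγ : γ ∈ Set.Ico (1/2 : ℝ) 1) (hT : 0 < T)
    (ustar : ℝ → ℝ)
    (hu : ∀ t, ustar t = Real.exp (μ*t) *
      ((Real.exp (-2*(1-γ)*μ*t) - Real.exp (-2*(1-γ)*μ*T)) /
        (1 - Real.exp (-2*(1-γ)*μ*T))) ^ (1/(1-γ))) :
    ∀ t ∈ Set.Ico (0:ℝ) T,
      HasDerivAt ustar
        (μ * ustar t
          - (2*μ / (1 - Real.exp (-2*μ*(1-γ)*T))) * Real.exp (-μ*(1-γ)*t)
            * (ustar t) ^ γ) t :=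
  most_likely_path_ode_general μ γ T hμ hγ ustar hu
end
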